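/- For every n ≥ 0, ∫_0^1 Q_n(u; 0, 1) du = 2^n · B_n(1/2), where Q_n(u; 0, 1) = Σ_{k=1}^{n+1} M_{n+1,k} u^{n+1−k} (u−1)^{k−1} and B_n is the n-th Bernoulli polynomial. -/

import Mathlib

open scoped BigOperators
open MeasureTheory

/-- MacMahon numbers `M n k`: `M n 1 = 1`, `M n k = 0` outside `1 ≤ k ≤ n`, and
`M n k = (2k−1) M (n−1) k + (2n−2k+1) M (n−1) (k−1)`. -/
def macmahon : ℕ → ℕ → ℕ
  | 0, _ => 0
  | 1, 1 => 1
  | 1, _ => 0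
  | n + 2, 0 => 0
  | n + 2, k + 1 =>
      (2 * k + 1) * macmahon (n + 1) (k + 1) +
        (2 * (n + 2) - 2 * (k + 1) + 1) * macmahon (n + 1) k

/-- Derivative polynomial `Q_n(u;a,b) = Σ_{k=1}^{n+1} M_{n+1,k} (u-a)^(n+1-k) (u-b)^(k-1)`. -/
noncomputable def Q (n : ℕ) (a b u : ℝ) : ℝ :=
  ∑ k ∈ Finset.Icc 1 (n + 1), (macmahon (n + 1) k : ℝ) * (u - a) ^ (n + 1 - k) * (u - b) ^ (k - 1)

/-- The `n`-th Bernoulli polynomial evaluated at a real `x`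
(convention `t e^{xt}/(e^t - 1) = Σ B_n(x) t^n / n!`). -/
noncomputable def bernPoly (n : ℕ) (x : ℝ) : ℝ :=
  ((Polynomial.bernoulli n).map (algebraMap ℚ ℝ)).eval x

/-!
Write `q_n = Q_n(·; 0, 1)`. The MacMahon recurrence says `q_{n+1} = L q_n` for the operator
`L f = 2X(X-1) f' + (2X-1) f`. Put `p_n = (L + 2)^n 1 = ∑ᵢ C(n,i) 2^(n-i) q_i`. By induction
`(1 - X) p_n + X q_n = 1`, whence `p_{n+1} - q_{n+1} = (2X(X-1)(p_n - q_n))' + (p_n - q_n) + 2`;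
since `2X(X-1)` vanishes at `0` and `1`, this gives `∫₀¹ (p_n - q_n) = 2n`. So the integrals
`I_i = ∫₀¹ q_i` solve the triangular system `∑_{i ≤ n} C(n+1,i) 2^(n+1-i) I_i = 2(n+1)`, and so do
the numbers `2^i B_i(1/2)`, by `∑_{i ≤ n} C(n+1,i) B_i(x) = (n+1) x^n`.
-/

open Polynomial Finset

theorem macmahon_zero_right (m : ℕ) : macmahon m 0 = 0 := by
  rcases m with _ | _ | _ <;> rfl

theorem macmahon_eq_zero_of_lt {m k : ℕ} (h : m < k) : macmahon m k = 0 := by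
  induction m generalizing k with
  | zero => rfl
  | succ m ih =>
    obtain ⟨k, rfl⟩ : ∃ j, k = j + 1 := ⟨k - 1, by omega⟩
    rcases m with _ | m
    · obtain ⟨k, rfl⟩ : ∃ j, k = j + 1 := ⟨k - 1, by omega⟩
      rfl
    · simp only [macmahon, ih (show m + 1 < k + 1 by omega), ih (show m + 1 < k by omega),
        mul_zero, add_zero]

theorem macmahon_succ_succ {a b : ℕ} (h : a + b ≠ 0) :
    macmahon (a + b + 1) (b + 1) =
      (2 * b + 1) * macmahon (a + b) (b + 1) + (2 * a + 1) * macmahon (a + b) b := by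
  obtain ⟨n, hn⟩ := Nat.exists_eq_succ_of_ne_zero h
  rw [hn, macmahon, show 2 * (n + 1 + 1) - 2 * (b + 1) + 1 = 2 * a + 1 by omega]

section

variable {R : Type*} [CommRing R]

noncomputable def macmahonOp : Module.End R R[X] :=
  LinearMap.mulLeft R (2 * X * (X - 1)) ∘ₗ derivative + LinearMap.mulLeft R (2 * X - 1)

theorem macmahonOp_apply (f : R[X]) :
    macmahonOp f = 2 * X * (X - 1) * derivative f + (2 * X - 1) * f := rfl

theorem macmahonOp_X_pow_mul_X_sub_one_pow (a b : ℕ) :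
    macmahonOp ((X : R[X]) ^ a * (X - 1) ^ b) =
      (2 * b + 1) • (X ^ (a + 1) * (X - 1) ^ b) + (2 * a + 1) • (X ^ a * (X - 1) ^ (b + 1)) := by
  rw [macmahonOp_apply, derivative_mul, derivative_X_pow, derivative_pow, derivative_sub,
    derivative_X, derivative_one, sub_zero, mul_one]
  rcases a with _ | a <;> rcases b with _ | b <;> simp [pow_succ] <;> ring

variable (R) in
noncomputable def macmahonPoly (n : ℕ) : R[X] := (macmahonOp ^ n) 1

theorem macmahonPoly_succ (n : ℕ) :
    macmahonPoly R (n + 1) = macmahonOp (macmahonPoly R n) := by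
  rw [macmahonPoly, pow_succ', Module.End.mul_apply, macmahonPoly]

theorem macmahonPoly_eq_sum_antidiagonal (n : ℕ) :
    macmahonPoly R n =
      ∑ p ∈ antidiagonal n, macmahon (n + 1) (p.2 + 1) • ((X : R[X]) ^ p.1 * (X - 1) ^ p.2) := by
  induction n with
  | zero => simp [macmahonPoly, show macmahon 1 1 = 1 from rfl]
  | succ n ih =>
    have hrec : ∀ p ∈ antidiagonal (n + 1), macmahon (n + 1 + 1) (p.2 + 1) =
        (2 * p.2 + 1) * macmahon (n + 1) (p.2 + 1) + (2 * p.1 + 1) * macmahon (n + 1) p.2 := by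
      intro p hp
      have hp := HasAntidiagonal.mem_antidiagonal.mp hp
      rw [← hp]
      exact macmahon_succ_succ (by omega)
    rw [macmahonPoly_succ, ih, map_sum]
    conv_rhs => rw [sum_congr rfl fun p hp => by rw [hrec p hp, add_smul]]
    simp only [map_nsmul, macmahonOp_X_pow_mul_X_sub_one_pow, smul_add, smul_smul,
      sum_add_distrib]
    rw [Nat.sum_antidiagonal_succ, Nat.sum_antidiagonal_succ',
      macmahon_eq_zero_of_lt (show n + 1 < n + 1 + 1 by omega), macmahon_zero_right]
    simp only [zero_mul, zero_smul, zero_add, mul_comm]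

variable (R) in
noncomputable def shiftedMacmahonPoly (n : ℕ) : R[X] := ((macmahonOp + 2) ^ n) 1

theorem shiftedMacmahonPoly_succ (n : ℕ) :
    shiftedMacmahonPoly R (n + 1) =
      macmahonOp (shiftedMacmahonPoly R n) + 2 * shiftedMacmahonPoly R n := by
  rw [shiftedMacmahonPoly, pow_succ', Module.End.mul_apply, ← shiftedMacmahonPoly,
    LinearMap.add_apply, Module.End.ofNat_apply, two_smul, two_mul]

theorem shiftedMacmahonPoly_eq_sum (n : ℕ) :
    shiftedMacmahonPoly R n =
      ∑ i ∈ range (n + 1), (n.choose i * 2 ^ (n - i)) • macmahonPoly R i := by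
  rw [shiftedMacmahonPoly, (Commute.ofNat_right macmahonOp 2).add_pow, LinearMap.sum_apply]
  refine sum_congr rfl fun i _ => ?_
  have hcoeff :
      (2 : Module.End R R[X]) ^ (n - i) * n.choose i = (n.choose i * 2 ^ (n - i) : ℕ) := by
    push_cast
    exact (Nat.cast_commute _ _).eq.symm
  rw [mul_assoc, hcoeff, Module.End.mul_apply, Module.End.natCast_apply, map_nsmul, macmahonPoly]

theorem one_sub_X_mul_shiftedMacmahonPoly_add_X_mul_macmahonPoly (n : ℕ) :
    (1 - X) * shiftedMacmahonPoly R n + X * macmahonPoly R n = 1 := by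
  induction n with
  | zero => simp [shiftedMacmahonPoly, macmahonPoly]
  | succ n ih =>
    have hd := congrArg derivative ih
    simp only [derivative_add, derivative_mul, derivative_one, derivative_X,
      derivative_sub, one_mul, zero_sub] at hd
    rw [shiftedMacmahonPoly_succ, macmahonPoly_succ, macmahonOp_apply, macmahonOp_apply]
    linear_combination (2 * X * (X - 1)) * hd + ih

theorem shiftedMacmahonPoly_sub_macmahonPoly_succ (n : ℕ) :
    shiftedMacmahonPoly R (n + 1) - macmahonPoly R (n + 1) =
      derivative (2 * X * (X - 1) * (shiftedMacmahonPoly R n - macmahonPoly R n)) +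
        (shiftedMacmahonPoly R n - macmahonPoly R n) + 2 := by
  rw [shiftedMacmahonPoly_succ, macmahonPoly_succ, macmahonOp_apply, macmahonOp_apply]
  simp only [derivative_mul, derivative_sub, derivative_X, derivative_one, derivative_ofNat,
    zero_mul, mul_one, zero_add, sub_zero]
  linear_combination 2 * one_sub_X_mul_shiftedMacmahonPoly_add_X_mul_macmahonPoly (R := R) n
end

theorem eval_macmahonPoly (n : ℕ) (u : ℝ) : (macmahonPoly ℝ n).eval u = Q n 0 1 u := by
  rw [macmahonPoly_eq_sum_antidiagonal, eval_finsetSum, Q]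
  symm
  refine sum_nbij' (fun k => (n + 1 - k, k - 1)) (fun p => p.2 + 1) ?_ ?_ ?_ ?_ ?_
  · intro k hk
    rw [mem_Icc] at hk
    rw [HasAntidiagonal.mem_antidiagonal]
    omega
  · intro p hp
    rw [HasAntidiagonal.mem_antidiagonal] at hp
    rw [mem_Icc]
    omega
  · intro k hk
    rw [mem_Icc] at hk
    omega
  · intro p hp
    rw [HasAntidiagonal.mem_antidiagonal] at hp
    ext <;> dsimp only <;> omega
  · intro k hk
    rw [mem_Icc] at hk
    simp [Nat.sub_add_cancel hk.1, mul_assoc]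

noncomputable def polyIntegral (a b : ℝ) : ℝ[X] →ₗ[ℝ] ℝ where
  toFun p := ∫ x in a..b, p.eval x
  map_add' p q := by
    simpa using intervalIntegral.integral_add (p.continuous.intervalIntegrable a b)
      (q.continuous.intervalIntegrable a b)
  map_smul' c p := by simp

theorem polyIntegral_apply (a b : ℝ) (p : ℝ[X]) :
    polyIntegral a b p = ∫ x in a..b, p.eval x := rfl

theorem polyIntegral_derivative (a b : ℝ) (p : ℝ[X]) :
    polyIntegral a b (derivative p) = p.eval b - p.eval a :=
  intervalIntegral.integral_eq_sub_of_hasDerivAt (fun x _ => p.hasDerivAt x)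
    ((derivative p).continuous.intervalIntegrable a b)

theorem polyIntegral_ofNat (a b : ℝ) (m : ℕ) [m.AtLeastTwo] :
    polyIntegral a b (ofNat(m) : ℝ[X]) = ofNat(m) * (b - a) := by
  simp only [polyIntegral_apply, eval_ofNat, intervalIntegral.integral_const, smul_eq_mul]
  ring

theorem polyIntegral_shiftedMacmahonPoly_sub_macmahonPoly (n : ℕ) :
    polyIntegral 0 1 (shiftedMacmahonPoly ℝ n - macmahonPoly ℝ n) = 2 * n := by
  induction n with
  | zero => simp [shiftedMacmahonPoly, macmahonPoly]
  | succ n ih =>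
    rw [shiftedMacmahonPoly_sub_macmahonPoly_succ, map_add, map_add, polyIntegral_derivative, ih,
      polyIntegral_ofNat]
    simp only [eval_mul, eval_X, eval_sub, eval_one, sub_self, mul_zero, zero_mul, sub_zero]
    push_cast
    ring

theorem sum_choose_mul_polyIntegral_macmahonPoly (n : ℕ) :
    ∑ i ∈ range (n + 1), ((n + 1).choose i * 2 ^ (n + 1 - i) : ℝ) *
      polyIntegral 0 1 (macmahonPoly ℝ i) = 2 * (n + 1) := by
  have h := polyIntegral_shiftedMacmahonPoly_sub_macmahonPoly (n + 1)
  rw [map_sub, shiftedMacmahonPoly_eq_sum, map_sum, sum_range_succ] at h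
  simp only [map_nsmul] at h
  simp only [Nat.choose_self, Nat.sub_self, pow_zero, mul_one, one_smul, nsmul_eq_mul] at h
  push_cast at h
  linarith

theorem sum_choose_mul_bernPoly (n : ℕ) (x : ℝ) :
    ∑ i ∈ range (n + 1), ((n + 1).choose i : ℝ) * bernPoly i x = (n + 1) * x ^ n := by
  have h := congrArg (aeval x) (Polynomial.sum_bernoulli n)
  simp only [map_sum, map_smul, aeval_monomial, Rat.smul_def, Rat.cast_natCast] at h
  simpa [bernPoly, eval_map_algebraMap, nsmul_eq_mul] using h

theorem sum_choose_mul_two_pow_mul_bernPoly_half (n : ℕ) :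
    ∑ i ∈ range (n + 1), ((n + 1).choose i * 2 ^ (n + 1 - i) : ℝ) *
      (2 ^ i * bernPoly i (1 / 2)) = 2 * (n + 1) := by
  have h := sum_choose_mul_bernPoly n (1 / 2)
  calc _ = 2 ^ (n + 1) * ∑ i ∈ range (n + 1), ((n + 1).choose i : ℝ) * bernPoly i (1 / 2) := by
        rw [mul_sum]
        refine sum_congr rfl fun i hi => ?_
        rw [← pow_sub_mul_pow 2 (mem_range.mp hi).le]
        ring
    _ = 2 * (n + 1) := by
        rw [h, one_div, inv_pow, pow_succ]
        field_simp

theorem eq_of_sum_range_succ_mul_eq {K : Type*} [Ring K] [NoZeroDivisors K] {a b : ℕ → K}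
    (c : ℕ → ℕ → K) (hc : ∀ n, c n n ≠ 0)
    (h : ∀ n, ∑ i ∈ range (n + 1), c n i * a i = ∑ i ∈ range (n + 1), c n i * b i) : a = b := by
  funext n
  induction n using Nat.strong_induction_on with
  | _ n ih =>
    have hn := h n
    rw [sum_range_succ, sum_range_succ,
      sum_congr rfl fun i hi => by rw [ih i (mem_range.mp hi)]] at hn
    exact mul_left_cancel₀ (hc n) (add_left_cancel hn)

theorem integral_Q_zero_one (n : ℕ) :
    ∫ u in (0:ℝ)..1, Q n 0 1 u = 2 ^ n * bernPoly n (1 / 2) := by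
  have hdiag : ∀ m, ((m + 1).choose m * 2 ^ (m + 1 - m) : ℝ) ≠ 0 := fun m =>
    mul_ne_zero (Nat.cast_ne_zero.2 (Nat.choose_pos m.le_succ).ne') (by positivity)
  have key : (fun m => polyIntegral 0 1 (macmahonPoly ℝ m)) = fun m => 2 ^ m * bernPoly m (1 / 2) :=
    eq_of_sum_range_succ_mul_eq _ hdiag fun m =>
      (sum_choose_mul_polyIntegral_macmahonPoly m).trans
        (sum_choose_mul_two_pow_mul_bernPoly_half m).symm
  simp_rw [← eval_macmahonPoly]
  exact congrFun key n
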